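/- Let ε > 0 and let x, y ∈ ℝ² satisfy |x| ≥ ε, |y| ≥ ε and ⟨x, y⟩ ≤ 0 (where ⟨·,·⟩ is the Euclidean inner product, so the angle between x and y has nonpositive cosine). Then ‖F_ε(x) − F_ε(y)‖ ≥ ((|x| − ε) + (|y| − ε))/2 ≥ ρ(x, y)/2. -/

import Mathlib

/-! `F_ε` is a radial contraction by `ε`, and vectors at an obtuse angle are at distance at least
the mean of their lengths, since `‖u - v‖² = ‖u‖² + ‖v‖² - 2⟪u, v⟫ ≥ ‖u‖² + ‖v‖²`. -/

open scoped RealInnerProductSpace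

/-- The projection map `F_ε(x) = ((|x| − ε)/|x|)·x`, defined on `{x ∈ ℝ² : |x| ≥ ε}`,
used to embed the plane component of the space of varying dimension into `ℝ³`. -/
noncomputable def Fmap (ε : ℝ) (x : EuclideanSpace ℝ (Fin 2)) : EuclideanSpace ℝ (Fin 2) :=
  ((‖x‖ - ε) / ‖x‖) • x

theorem add_norm_div_two_le_norm_sub_of_inner_nonpos {E : Type*} [NormedAddCommGroup E]
    [InnerProductSpace ℝ E] {u v : E} (h : ⟪u, v⟫ ≤ 0) :
    (‖u‖ + ‖v‖) / 2 ≤ ‖u - v‖ := by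
  have hsq : ‖u‖ ^ 2 + ‖v‖ ^ 2 ≤ ‖u - v‖ ^ 2 := by
    rw [norm_sub_sq_real]
    linarith
  nlinarith [norm_nonneg u, norm_nonneg v, norm_nonneg (u - v), sq_nonneg (‖u‖ - ‖v‖)]

section Fmap

variable {ε : ℝ} {x y : EuclideanSpace ℝ (Fin 2)}

theorem norm_Fmap (hε : 0 < ε) (hx : ε ≤ ‖x‖) : ‖Fmap ε x‖ = ‖x‖ - ε := by
  have hx0 : 0 < ‖x‖ := hε.trans_le hx
  rw [Fmap, norm_smul, Real.norm_of_nonneg (div_nonneg (sub_nonneg.2 hx) hx0.le),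
    div_mul_cancel₀ _ hx0.ne']

theorem inner_Fmap_nonpos (hx : ε ≤ ‖x‖) (hy : ε ≤ ‖y‖) (h : ⟪x, y⟫ ≤ 0) :
    ⟪Fmap ε x, Fmap ε y⟫ ≤ 0 := by
  rw [Fmap, Fmap, real_inner_smul_left, real_inner_smul_right]
  exact mul_nonpos_of_nonneg_of_nonpos (div_nonneg (sub_nonneg.2 hx) (norm_nonneg x))
    (mul_nonpos_of_nonneg_of_nonpos (div_nonneg (sub_nonneg.2 hy) (norm_nonneg y)) h)

end Fmap

/-- If `|x|, |y| ≥ ε` and `⟨x, y⟩ ≤ 0`, then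
`‖F_ε(x) − F_ε(y)‖ ≥ ((|x| − ε) + (|y| − ε))/2 ≥ ρ(x, y)/2`, where
`ρ(x, y) = min(|x − y|, (|x| − ε) + (|y| − ε))`. -/
theorem Fmap_diff_ge_of_inner_nonpos (ε : ℝ) (hε : 0 < ε)
    (x y : EuclideanSpace ℝ (Fin 2)) (hx : ε ≤ ‖x‖) (hy : ε ≤ ‖y‖)
    (hinner : ⟪x, y⟫ ≤ 0) :
    ((‖x‖ - ε) + (‖y‖ - ε)) / 2 ≤ ‖Fmap ε x - Fmap ε y‖ ∧
      min ‖x - y‖ ((‖x‖ - ε) + (‖y‖ - ε)) / 2 ≤ ((‖x‖ - ε) + (‖y‖ - ε)) / 2 := by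
  refine ⟨?_, by gcongr; exact min_le_right _ _⟩
  rw [← norm_Fmap hε hx, ← norm_Fmap hε hy]
  exact add_norm_div_two_le_norm_sub_of_inner_nonpos (inner_Fmap_nonpos hx hy hinner)
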